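/- arXiv:2406.03504 — 4 statements merged into one kernel-verified Lean document; each statement's English description precedes it below -/
import Mathlib

section
/- Let h: ℝ → ℝ ∪ {+∞} be proper, closed, convex with h(0) = 0 and 0 an accumulation point of dom(h), and let λ > 0. Define g₁(x) = λ·‖x‖₀ + h(x) restricted to x ≠ 0, i.e., g₁(x) = h(x) + λ if x ≠ 0 and g₁(0) = +∞. Then the convex conjugate of g₁ satisfies g₁*(v) = h*(v) − λ for all v ∈ ℝ. -/
/-! Away from `0` the function `g₁` is `h + λ`, so `g₁*(v) = sup_{x ≠ 0} (v x - h x) - λ`. Removing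
the point `0` from the supremum defining `h*(v)` changes nothing: its term is `v·0 - h 0 = 0`, and
along the segment from `0` to a nonzero point `x₀` of `dom h` convexity gives
`v (t x₀) - h (t x₀) ≥ t (v x₀ - h x₀) → 0` as `t → 0⁺`. -/

open Classical

noncomputable section

def EDom (ω : ℝ → EReal) : Set ℝ := {x | ω x < ⊤}

def EProper (ω : ℝ → EReal) : Prop := (∀ x, ω x ≠ ⊥) ∧ ∃ x, ω x ≠ ⊤

def EConvex (ω : ℝ → EReal) : Prop :=
  ∀ x y a b : ℝ, 0 ≤ a → 0 ≤ b → a + b = 1 →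
    ω (a * x + b * y) ≤ (a : EReal) * ω x + (b : EReal) * ω y

def EClosed (ω : ℝ → EReal) : Prop := LowerSemicontinuous ω

/-- Convex conjugate of a function `ℝ → EReal`. -/
def conj (ω : ℝ → EReal) (v : ℝ) : EReal := ⨆ x : ℝ, ((v * x : ℝ) : EReal) - ω x

open Filter Topology

theorem EReal.iSup_sub_coe {ι : Sort*} (f : ι → EReal) (c : ℝ) :
    (⨆ i, f i) - c = ⨆ i, (f i - c) := by
  refine le_antisymm ?_ (iSup_le fun i => EReal.sub_le_sub (le_iSup f i) le_rfl)
  rw [EReal.sub_le_iff_le_add (.inl (EReal.coe_ne_bot c)) (.inl (EReal.coe_ne_top c))]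
  refine iSup_le fun i => ?_
  calc f i = (f i - c) + c := EReal.sub_add_cancel.symm
    _ ≤ (⨆ j, (f j - c)) + c := by gcongr; exact le_iSup (fun j => f j - c) i

theorem EReal.sub_add_coe (a b : EReal) (c : ℝ) : a - (b + c) = a - b - c := by
  rw [sub_eq_add_neg, EReal.neg_add (.inr (EReal.coe_ne_top c)) (.inr (EReal.coe_ne_bot c)),
    sub_eq_add_neg, sub_eq_add_neg, sub_eq_add_neg, add_assoc]

section

variable {h : ℝ → EReal}

theorem EConvex.apply_mul_le (hConvex : EConvex h) (h0 : h 0 = 0) {t : ℝ} (ht0 : 0 ≤ t)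
    (ht1 : t ≤ 1) (x : ℝ) : h (t * x) ≤ t * h x := by
  simpa [h0] using hConvex x 0 t (1 - t) ht0 (by linarith) (by ring)

theorem zero_le_iSup_ne_zero_sub (hConvex : EConvex h) (h0 : h 0 = 0) {x₀ M : ℝ}
    (hx₀ : x₀ ≠ 0) (hM : h x₀ = M) (v : ℝ) :
    0 ≤ ⨆ (x) (_ : x ≠ 0), ((v * x : ℝ) : EReal) - h x := by
  set c := v * x₀ - M with hc
  have hsegment : ∀ t ∈ Set.Ioc (0 : ℝ) 1,
      ((t * c : ℝ) : EReal) ≤ ⨆ (x) (_ : x ≠ 0), ((v * x : ℝ) : EReal) - h x := by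
    rintro t ⟨ht0, ht1⟩
    have hle : h (t * x₀) ≤ ((t * M : ℝ) : EReal) := by
      simpa [hM, ← EReal.coe_mul] using hConvex.apply_mul_le h0 ht0.le ht1 x₀
    calc ((t * c : ℝ) : EReal) = ((v * (t * x₀) : ℝ) : EReal) - ((t * M : ℝ) : EReal) := by
          rw [← EReal.coe_sub, hc]; congr 1; ring
      _ ≤ ((v * (t * x₀) : ℝ) : EReal) - h (t * x₀) := EReal.sub_le_sub le_rfl hle
      _ ≤ _ := le_iSup₂_of_le (t * x₀) (mul_ne_zero ht0.ne' hx₀) le_rfl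
  have hlim : Tendsto (fun t : ℝ => ((t * c : ℝ) : EReal)) (𝓝[>] 0) (𝓝 0) := by
    refine ((continuous_coe_real_ereal.comp (continuous_mul_const c)).tendsto' 0 0 ?_).mono_left
      nhdsWithin_le_nhds
    simp
  exact le_of_tendsto hlim (eventually_of_mem (Ioc_mem_nhdsGT one_pos) hsegment)

theorem conj_eq_iSup_ne_zero (hConvex : EConvex h) (h0 : h 0 = 0) {x₀ M : ℝ}
    (hx₀ : x₀ ≠ 0) (hM : h x₀ = M) (v : ℝ) :
    conj h v = ⨆ (x) (_ : x ≠ 0), ((v * x : ℝ) : EReal) - h x := by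
  refine le_antisymm (iSup_le fun x => ?_)
    (iSup₂_le fun x _ => le_iSup (fun y => ((v * y : ℝ) : EReal) - h y) x)
  by_cases hx : x = 0
  · subst hx
    simpa [h0] using zero_le_iSup_ne_zero_sub hConvex h0 hx₀ hM v
  · exact le_iSup₂_of_le x hx le_rfl

end

theorem stmt_1_general (h : ℝ → EReal) (lam : ℝ)
    (hProper : EProper h) (hConvex : EConvex h)
    (h0 : h 0 = 0) (hAcc : AccPt 0 (Filter.principal (EDom h))) :
    ∀ v : ℝ,
      conj (fun x => if x = 0 then ⊤ else h x + (lam : EReal)) v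
        = conj h v - (lam : EReal) := by
  intro v
  obtain ⟨x₀, ⟨-, hx₀dom⟩, hx₀⟩ := accPt_iff_nhds.1 hAcc Set.univ univ_mem
  have hM : h x₀ = ((h x₀).toReal : EReal) :=
    (EReal.coe_toReal (ne_of_lt hx₀dom) (hProper.1 x₀)).symm
  rw [conj_eq_iSup_ne_zero hConvex h0 hx₀ hM, EReal.iSup_sub_coe]
  refine iSup_congr fun x => ?_
  by_cases hx : x = 0
  · simp [hx]
  · simp only [iSup_pos hx, if_neg hx, EReal.sub_add_coe]

theorem stmt_1 (h : ℝ → EReal) (lam : ℝ) (hlam : 0 < lam)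
    (hProper : EProper h) (hClosed : EClosed h) (hConvex : EConvex h)
    (h0 : h 0 = 0) (hAcc : AccPt 0 (Filter.principal (EDom h))) :
    ∀ v : ℝ,
      conj (fun x => if x = 0 then ⊤ else h x + (lam : EReal)) v
        = conj h v - (lam : EReal) :=
  stmt_1_general h lam hProper hConvex h0 hAcc
end
end

section
/- Let h: ℝ → ℝ ∪ {+∞} be proper, closed, convex with h(0) = 0, and let λ > 0. Define g(x) = λ·‖x‖₀ + h(x). Then the convex conjugate satisfies g*(v) = max(h*(v) − λ, 0) for all v ∈ ℝ, provided 0 is an accumulation point of dom(h). -/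
open Classical

noncomputable section

/-- The scalar "ℓ₀-norm": `0` at `0`, `1` elsewhere. -/
def norm0 (x : ℝ) : ℝ := if x = 0 then 0 else 1

/-!
Split each supremum into its term at `x = 0` and the supremum `S` over `x ≠ 0`. Both `g` and `h`
vanish at `0`, and `g = λ + h` off `0`, so `g*(v) = max (S - λ) 0`, while
`h*(v) - λ = max (S - λ) (-λ)`; since `-λ ≤ 0`, taking the maximum with `0` makes them agree.
-/

namespace EReal

def subCoeOrderIso (r : ℝ) : EReal ≃o EReal :=
  Equiv.toOrderIso
    { toFun := fun x => x - r
      invFun := fun x => x + r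
      left_inv := fun _ => sub_add_cancel
      right_inv := fun _ => add_sub_cancel_right }
    (fun _ _ hxy => sub_le_sub hxy le_rfl) (fun _ _ hxy => add_le_add_left hxy _)

lemma iSup₂_sub_coe {ι : Sort*} {κ : ι → Sort*} (f : ∀ i, κ i → EReal) (r : ℝ) :
    (⨆ (i) (j), f i j) - r = ⨆ (i) (j), (f i j - r) :=
  (subCoeOrderIso r).map_iSup₂ f

lemma max_sub_coe (a b : EReal) (r : ℝ) : max a b - r = max (a - r) (b - r) :=
  (subCoeOrderIso r).map_sup a b

lemma coe_sub_coe_add (a r : ℝ) (x : EReal) : (a : EReal) - (r + x) = (a - x) - r := by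
  rw [sub_eq_add_neg, neg_add (.inl (coe_ne_bot r)) (.inl (coe_ne_top r)), sub_eq_add_neg,
    sub_eq_add_neg, sub_eq_add_neg, add_comm (-(r : EReal)), add_assoc]

end EReal

lemma conj_eq_max_iSup_ne_zero {ω : ℝ → EReal} (hω : ω 0 = 0) (v : ℝ) :
    conj ω v = max (⨆ (x) (_ : x ≠ 0), ((v * x : ℝ) : EReal) - ω x) 0 := by
  rw [conj, iSup_split_single _ 0, mul_zero, hω, EReal.coe_zero, sub_zero, max_comm]

theorem stmt_2_general (h : ℝ → EReal) (lam : ℝ) (hlam : 0 < lam)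
    (h0 : h 0 = 0) :
    ∀ v : ℝ,
      conj (fun x => ((lam * norm0 x : ℝ) : EReal) + h x) v
        = max (conj h v - (lam : EReal)) 0 := by
  intro v
  have hg0 : ((lam * norm0 0 : ℝ) : EReal) + h 0 = 0 := by simp [norm0, h0]
  have hterm : ∀ x ≠ 0, ((v * x : ℝ) : EReal) - (((lam * norm0 x : ℝ) : EReal) + h x)
      = ((v * x : ℝ) - h x) - lam := by
    intro x hx
    rw [norm0, if_neg hx, mul_one, EReal.coe_sub_coe_add]
  have hneg_lam : -(lam : EReal) ≤ 0 := by exact_mod_cast (neg_nonpos.2 hlam.le)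
  rw [conj_eq_max_iSup_ne_zero hg0, conj_eq_max_iSup_ne_zero h0, EReal.max_sub_coe,
    EReal.iSup₂_sub_coe, zero_sub, max_assoc, max_eq_right hneg_lam]
  congr 1
  exact iSup_congr fun x => iSup_congr (hterm x)

theorem stmt_2 (h : ℝ → EReal) (lam : ℝ) (hlam : 0 < lam)
    (hProper : EProper h) (hClosed : EClosed h) (hConvex : EConvex h)
    (h0 : h 0 = 0) (hAcc : AccPt 0 (Filter.principal (EDom h))) :
    ∀ v : ℝ,
      conj (fun x => ((lam * norm0 x : ℝ) : EReal) + h x) v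
        = max (conj h v - (lam : EReal)) 0 :=
  stmt_2_general h lam hlam h0
end
end

section
/- Let ν' = (S₀',S₁',S•') be a successor of ν = (S₀,S₁,S•) and i ∈ S•'. Denote by ν_{0,i} (resp. ν'_{0,i}) the node obtained from ν (resp. ν') by moving index i to the zero-set, and similarly ν_{1,i}, ν'_{1,i} for moving to the one-set. Then for any u ∈ ℝᵐ and threshold p̄ ∈ ℝ: D^{ν_{0,i}}(u) > p̄ implies D^{ν'_{0,i}}(u) > p̄, and D^{ν_{1,i}}(u) > p̄ implies D^{ν'_{1,i}}(u) > p̄. -/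
open Classical

noncomputable section

/-- Convex conjugate of a function on `ℝᵐ`. -/
def conjM {m : ℕ} (f : (Fin m → ℝ) → EReal) (u : Fin m → ℝ) : EReal :=
  ⨆ x : Fin m → ℝ, ((∑ j, u j * x j : ℝ) : EReal) - f x

/-- Properness for functions on `ℝᵐ`. -/
def EProperM {m : ℕ} (f : (Fin m → ℝ) → EReal) : Prop :=
  (∀ x, f x ≠ ⊥) ∧ ∃ x, f x ≠ ⊤

/-- Convexity for functions on `ℝᵐ`. -/
def EConvexM {m : ℕ} (f : (Fin m → ℝ) → EReal) : Prop :=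
  ∀ (x y : Fin m → ℝ) (a b : ℝ), 0 ≤ a → 0 ≤ b → a + b = 1 →
    f (a • x + b • y) ≤ (a : EReal) * f x + (b : EReal) * f y

/-- Closedness for functions on `ℝᵐ`. -/
def EClosedM {m : ℕ} (f : (Fin m → ℝ) → EReal) : Prop := LowerSemicontinuous f

/-- The dual objective `D^ν` at a node `ν = (S₀, S₁, S•)` where
`S• = {1,…,n} \ (S₀ ∪ S₁)`. -/
def Dnode {m n : ℕ} (f : (Fin m → ℝ) → EReal) (h : ℝ → EReal)
    (A : Matrix (Fin m) (Fin n) ℝ) (lam : ℝ) (S0 S1 : Finset (Fin n))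
    (u : Fin m → ℝ) : EReal :=
  - conjM f (-u)
    - ∑ i ∈ S1, (conj h (∑ j, A j i * u j) - (lam : EReal))
    - ∑ i ∈ Finset.univ \ (S0 ∪ S1),
        max (conj h (∑ j, A j i * u j) - (lam : EReal)) 0

/-!
Write `D^ν(u) = -f*(-u) - ∑ᵢ cᵢ^ν` with `cᵢ^ν = h*(aᵢᵀu) - λ` on `S₁`, `0` on `S₀` and
`(h*(aᵢᵀu) - λ)₊` on `S•`. Passing to a successor only lowers each `cᵢ`, since a free index
becomes fixed at `x ≤ x₊` or `0 ≤ x₊`; hence `D` increases along successors, and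
`ν'_{b,i}` is a successor of `ν_{b,i}`. Because `h(0) = 0` forces `h* ≥ 0`, no `cᵢ` is `⊥`,
so subtraction in `EReal` distributes over the sum.
-/

lemma conj_nonneg_of_map_zero {ω : ℝ → EReal} (hω : ω 0 = 0) (v : ℝ) : 0 ≤ conj ω v := by
  simpa [hω, conj] using le_iSup (fun x : ℝ => ((v * x : ℝ) : EReal) - ω x) 0

lemma conj_sub_coe_ne_bot {ω : ℝ → EReal} (hω : ω 0 = 0) (v c : ℝ) : conj ω v - c ≠ ⊥ := by
  rw [sub_eq_add_neg, ne_eq, EReal.add_eq_bot_iff, not_or]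
  exact ⟨ne_bot_of_le_ne_bot (by simp) (conj_nonneg_of_map_zero hω v), by simp⟩

lemma EReal.sub_sub_of_ne_bot {a b c : EReal} (hb : b ≠ ⊥) (hc : c ≠ ⊥) :
    a - b - c = a - (b + c) := by
  rw [sub_eq_add_neg, sub_eq_add_neg, sub_eq_add_neg, add_assoc,
    EReal.neg_add (Or.inl hb) (Or.inr hc), sub_eq_add_neg]

lemma EReal.sum_ne_bot {α : Type*} {s : Finset α} {g : α → EReal} (hg : ∀ i ∈ s, g i ≠ ⊥) :
    ∑ i ∈ s, g i ≠ ⊥ := by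
  induction s using Finset.induction_on with
  | empty => simp
  | insert a s ha ih =>
    rw [Finset.sum_insert ha, ne_eq, EReal.add_eq_bot_iff, not_or]
    exact ⟨hg a (by simp), ih fun i hi => hg i (by simp [hi])⟩

def nodePenalty {m n : ℕ} (h : ℝ → EReal) (A : Matrix (Fin m) (Fin n) ℝ) (lam : ℝ)
    (S0 S1 : Finset (Fin n)) (u : Fin m → ℝ) (i : Fin n) : EReal :=
  if i ∈ S1 then conj h (∑ j, A j i * u j) - lam
  else if i ∈ S0 then 0
  else max (conj h (∑ j, A j i * u j) - lam) 0

lemma Dnode_eq_sub_sum_nodePenalty {m n : ℕ} (f : (Fin m → ℝ) → EReal) {h : ℝ → EReal}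
    (h0 : h 0 = 0) (A : Matrix (Fin m) (Fin n) ℝ) (lam : ℝ) (S0 S1 : Finset (Fin n))
    (u : Fin m → ℝ) :
    Dnode f h A lam S0 S1 u = - conjM f (-u) - ∑ i, nodePenalty h A lam S0 S1 u i := by
  have hfree : ({i | i ∉ S1 ∧ i ∉ S0} : Finset (Fin n)) = Finset.univ \ (S0 ∪ S1) := by
    ext i
    simp [and_comm]
  have hsplit : ∑ i, nodePenalty h A lam S0 S1 u i
      = ∑ i ∈ S1, (conj h (∑ j, A j i * u j) - lam)
        + ∑ i ∈ Finset.univ \ (S0 ∪ S1), max (conj h (∑ j, A j i * u j) - lam) 0 := by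
    simp only [nodePenalty]
    rw [Finset.sum_ite, Finset.sum_ite, Finset.sum_const_zero, zero_add,
      Finset.filter_filter, hfree, Finset.filter_mem_eq_inter, Finset.univ_inter]
  rw [hsplit, ← EReal.sub_sub_of_ne_bot, Dnode]
  all_goals refine EReal.sum_ne_bot fun i _ => ?_
  · exact conj_sub_coe_ne_bot h0 _ _
  · exact ne_bot_of_le_ne_bot (conj_sub_coe_ne_bot h0 _ _) (le_max_left _ _)

lemma nodePenalty_antitone {m n : ℕ} (h : ℝ → EReal) (A : Matrix (Fin m) (Fin n) ℝ)
    (lam : ℝ) {S0 S1 S0' S1' : Finset (Fin n)} (hd' : Disjoint S0' S1')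
    (hsub0 : S0 ⊆ S0') (hsub1 : S1 ⊆ S1') (u : Fin m → ℝ) (i : Fin n) :
    nodePenalty h A lam S0' S1' u i ≤ nodePenalty h A lam S0 S1 u i := by
  unfold nodePenalty
  by_cases hi1 : i ∈ S1
  · simp [hi1, hsub1 hi1]
  by_cases hi0 : i ∈ S0
  · simp [hi1, hi0, hsub0 hi0, Finset.disjoint_left.1 hd' (hsub0 hi0)]
  simp only [hi1, hi0, if_false]
  split_ifs
  · exact le_max_left _ _
  · exact le_max_right _ _
  · exact le_rfl

lemma Dnode_mono {m n : ℕ} (f : (Fin m → ℝ) → EReal) {h : ℝ → EReal} (h0 : h 0 = 0)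
    (A : Matrix (Fin m) (Fin n) ℝ) (lam : ℝ) {S0 S1 S0' S1' : Finset (Fin n)}
    (hd' : Disjoint S0' S1') (hsub0 : S0 ⊆ S0') (hsub1 : S1 ⊆ S1') (u : Fin m → ℝ) :
    Dnode f h A lam S0 S1 u ≤ Dnode f h A lam S0' S1' u := by
  rw [Dnode_eq_sub_sum_nodePenalty f h0, Dnode_eq_sub_sum_nodePenalty f h0]
  exact EReal.sub_le_sub le_rfl
    (Finset.sum_le_sum fun i _ => nodePenalty_antitone h A lam hd' hsub0 hsub1 u i)

theorem stmt_8_general {m n : ℕ} (f : (Fin m → ℝ) → EReal) (h : ℝ → EReal)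
    (A : Matrix (Fin m) (Fin n) ℝ) (lam : ℝ)
    (h0 : h 0 = 0)
    (S0 S1 S0' S1' : Finset (Fin n))
    (hd' : Disjoint S0' S1')
    (hsub0 : S0 ⊆ S0') (hsub1 : S1 ⊆ S1')
    (i : Fin n) (hi : i ∉ S0' ∪ S1')
    (u : Fin m → ℝ) (pbar : ℝ) :
    ((pbar : EReal) < Dnode f h A lam (insert i S0) S1 u →
        (pbar : EReal) < Dnode f h A lam (insert i S0') S1' u)
      ∧ ((pbar : EReal) < Dnode f h A lam S0 (insert i S1) u →
        (pbar : EReal) < Dnode f h A lam S0' (insert i S1') u) := by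
  rw [Finset.mem_union, not_or] at hi
  exact ⟨fun hlt => hlt.trans_le <| Dnode_mono f h0 A lam
      (Finset.disjoint_insert_left.2 ⟨hi.2, hd'⟩) (Finset.insert_subset_insert i hsub0) hsub1 u,
    fun hlt => hlt.trans_le <| Dnode_mono f h0 A lam
      (Finset.disjoint_insert_right.2 ⟨hi.1, hd'⟩) hsub0 (Finset.insert_subset_insert i hsub1) u⟩

theorem stmt_8 {m n : ℕ} (f : (Fin m → ℝ) → EReal) (h : ℝ → EReal)
    (A : Matrix (Fin m) (Fin n) ℝ) (lam : ℝ) (hlam : 0 < lam)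
    (hfProper : EProperM f) (hfClosed : EClosedM f) (hfConvex : EConvexM f)
    (hProper : EProper h) (hClosed : EClosed h) (hConvex : EConvex h)
    (h0 : h 0 = 0) (hAcc : AccPt 0 (Filter.principal (EDom h)))
    (S0 S1 S0' S1' : Finset (Fin n))
    (hd : Disjoint S0 S1) (hd' : Disjoint S0' S1')
    (hsub0 : S0 ⊆ S0') (hsub1 : S1 ⊆ S1')
    (i : Fin n) (hi : i ∉ S0' ∪ S1')
    (u : Fin m → ℝ) (pbar : ℝ) :
    ((pbar : EReal) < Dnode f h A lam (insert i S0) S1 u →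
        (pbar : EReal) < Dnode f h A lam (insert i S0') S1' u)
      ∧ ((pbar : EReal) < Dnode f h A lam S0 (insert i S1) u →
        (pbar : EReal) < Dnode f h A lam S0' (insert i S1') u) :=
  stmt_8_general f h A lam h0 S0 S1 S0' S1' hd' hsub0 hsub1 i hi u pbar
end
end

section
/- Let λ, M > 0 and h(x) = η(|x| ≤ M). Then sup_{v ∈ ℝ} (x·v − max(M|v| − λ, 0)) = (λ/M)|x| + η(|x| ≤ M) for all x ∈ ℝ. That is, the conjugate of v ↦ max(h*(v) − λ, 0) equals x ↦ (λ/M)|x| if |x| ≤ M and +∞ otherwise. -/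
open Classical

noncomputable section

/-- Convex indicator: `0` if the condition holds, `⊤` otherwise. -/
def ind (p : Prop) : EReal := if p then 0 else ⊤

/-! The objective `v ↦ x v - max (M |v| - λ) 0` depends on `v` only through `x v` and `|v|`.
For `|x| ≤ M` it is maximised at `|v| = λ / M`, where the penalty vanishes and `x v = (λ / M) |x|`;
for `|x| > M` it grows like `(|x| - M) |v|` along `v = t · sign x`. -/

theorem exists_abs_eq_and_mul_eq (x : ℝ) {t : ℝ} (ht : 0 ≤ t) : ∃ v : ℝ, |v| = t ∧ x * v = t * |x| := by
  rcases le_or_gt 0 x with hx | hx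
  · exact ⟨t, abs_of_nonneg ht, by rw [abs_of_nonneg hx, mul_comm]⟩
  · exact ⟨-t, by rw [abs_neg, abs_of_nonneg ht], by rw [abs_of_neg hx]; ring⟩

theorem mul_sub_max_le_div_mul_abs {lam M x : ℝ} (hM : 0 < M) (hx : |x| ≤ M) (v : ℝ) :
    x * v - max (M * |v| - lam) 0 ≤ lam / M * |x| := by
  have hxv : x * v ≤ |x| * |v| := (le_abs_self _).trans (abs_mul x v).le
  rw [div_mul_eq_mul_div, le_div_iff₀ hM]
  rcases le_total (M * |v|) lam with hv | hv
  · rw [max_eq_right (sub_nonpos.2 hv)]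
    nlinarith [mul_le_mul_of_nonneg_left hv (abs_nonneg x)]
  · rw [max_eq_left (sub_nonneg.2 hv)]
    nlinarith [mul_nonneg (sub_nonneg.2 hx) (sub_nonneg.2 hv)]

theorem exists_mul_sub_max_eq_div_mul_abs {lam M : ℝ} (hM : 0 < M) (hlam : 0 ≤ lam) (x : ℝ) :
    ∃ v : ℝ, x * v - max (M * |v| - lam) 0 = lam / M * |x| := by
  obtain ⟨v, hv, hxv⟩ := exists_abs_eq_and_mul_eq x (div_nonneg hlam hM.le)
  exact ⟨v, by rw [hv, hxv, mul_div_cancel₀ _ hM.ne', sub_self, max_self, sub_zero]⟩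

theorem exists_lt_mul_sub_max {lam M x : ℝ} (hM : 0 ≤ M) (hlam : 0 ≤ lam) (hx : M < |x|)
    (r : ℝ) : ∃ v : ℝ, r < x * v - max (M * |v| - lam) 0 := by
  have hgap : 0 < |x| - M := sub_pos.2 hx
  set t := (|r| + 1) / (|x| - M)
  have ht : 0 ≤ t := by positivity
  obtain ⟨v, hv, hxv⟩ := exists_abs_eq_and_mul_eq x ht
  refine ⟨v, ?_⟩
  have hpen : max (M * |v| - lam) 0 ≤ M * t := by
    rw [hv]; exact max_le (by linarith) (by positivity)
  have hgrowth : t * (|x| - M) = |r| + 1 := div_mul_cancel₀ _ hgap.ne'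
  nlinarith [le_abs_self r]

theorem stmt_12 (lam M : ℝ) (hlam : 0 < lam) (hM : 0 < M) :
    ∀ x : ℝ,
      (⨆ v : ℝ, ((x * v - max (M * |v| - lam) 0 : ℝ) : EReal))
        = ((lam / M * |x| : ℝ) : EReal) + ind (|x| ≤ M) := by
  intro x
  rcases le_or_gt |x| M with hx | hx
  · rw [ind, if_pos hx, add_zero]
    obtain ⟨v₀, hv₀⟩ := exists_mul_sub_max_eq_div_mul_abs hM hlam.le x
    exact le_antisymm
      (iSup_le fun v => EReal.coe_le_coe (mul_sub_max_le_div_mul_abs hM hx v))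
      (le_iSup_of_le v₀ (by rw [hv₀]))
  · rw [ind, if_neg hx.not_ge, EReal.add_top_of_ne_bot (EReal.coe_ne_bot _),
      EReal.eq_top_iff_forall_lt]
    intro r
    obtain ⟨v, hv⟩ := exists_lt_mul_sub_max hM.le hlam.le hx r
    exact (EReal.coe_lt_coe hv).trans_le (le_iSup_of_le v le_rfl)
end
end
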